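/- arXiv:1809.02835 — 2 statements merged into one kernel-verified Lean document; each statement's English description precedes it below -/
import Mathlib

section
/- Let G = (A,B,E_G) be a bipartite graph with |A| = |B| = N and let k ≤ N. Construct H by adding disjoint sets A', B' of size N−k each, connecting every vertex of A' to every vertex of B ∪ B', and every vertex of B' to every vertex of A ∪ A'. Then G has a connected matching of size k if and only if H has a connected matching of size 2N−k (a perfect matching of H). -/
/-!
If `M` is a connected matching of `G` of size `k`, exactly `N - k` vertices of `A` and of `B`
are unmatched; pairing them with `B'` and `A'` gives a perfect matching of `H`, and it is
connected because every edge meeting `A' ∪ B'` is adjacent to every other edge of `H`.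
Conversely, in a matching of `H` at most `N - k` edges meet `A'` and at most `N - k` meet `B'`,
so at least `k` of its `2N - k` edges are edges of `G`, and any `k` of them form a connected
matching of `G`.
-/

def BipMatching {A B : Type*} (E : A → B → Prop) (M : Finset (A × B)) : Prop :=
  (∀ e ∈ M, E e.1 e.2) ∧ ∀ e ∈ M, ∀ f ∈ M, e ≠ f → e.1 ≠ f.1 ∧ e.2 ≠ f.2

def BipConnMatching {A B : Type*} (E : A → B → Prop) (M : Finset (A × B)) : Prop :=
  BipMatching E M ∧ ∀ e ∈ M, ∀ f ∈ M, e ≠ f → (E e.1 f.2 ∨ E f.1 e.2)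

/-- The edge relation of `H`: the left side is `A ⊕ A'`, the right side is `B ⊕ B'`
(with `|A'| = |B'| = N - k`); `A`–`B` edges are those of `G`, every vertex of `A'` is
joined to all of `B ∪ B'`, and every vertex of `B'` is joined to all of `A ∪ A'`. -/
def extGraph (N k : ℕ) (EG : Fin N → Fin N → Prop) :
    (Fin N ⊕ Fin (N - k)) → (Fin N ⊕ Fin (N - k)) → Prop
  | .inl a, .inl b => EG a b
  | _, _ => True

open Finset Function

section Matchings

variable {A B A' B' : Type*} {E : A → B → Prop}

theorem BipMatching.injOn_fst {M : Finset (A × B)} (hM : BipMatching E M) :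
    Set.InjOn Prod.fst (M : Set (A × B)) := fun e he f hf h =>
  by_contra fun hne => (hM.2 e he f hf hne).1 h

theorem BipMatching.injOn_snd {M : Finset (A × B)} (hM : BipMatching E M) :
    Set.InjOn Prod.snd (M : Set (A × B)) := fun e he f hf h =>
  by_contra fun hne => (hM.2 e he f hf hne).2 h

theorem BipMatching.card_filter_fst_mem_le [DecidableEq A] {M : Finset (A × B)}
    (hM : BipMatching E M) (S : Finset A) : (M.filter fun e : A × B => e.1 ∈ S).card ≤ S.card :=
  card_le_card_of_injOn Prod.fst (fun _ he => (mem_filter.1 he).2)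
    (hM.injOn_fst.mono (filter_subset _ M))

theorem BipMatching.card_filter_snd_mem_le [DecidableEq B] {M : Finset (A × B)}
    (hM : BipMatching E M) (S : Finset B) : (M.filter fun e : A × B => e.2 ∈ S).card ≤ S.card :=
  card_le_card_of_injOn Prod.snd (fun _ he => (mem_filter.1 he).2)
    (hM.injOn_snd.mono (filter_subset _ M))

theorem BipConnMatching.mono {M M₀ : Finset (A × B)} (hM : BipConnMatching E M)
    (hsub : M₀ ⊆ M) : BipConnMatching E M₀ :=
  ⟨⟨fun e he => hM.1.1 e (hsub he), fun e he f hf => hM.1.2 e (hsub he) f (hsub hf)⟩,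
    fun e he f hf => hM.2 e (hsub he) f (hsub hf)⟩

theorem BipConnMatching.map {E' : A' → B' → Prop} {M : Finset (A × B)}
    (hM : BipConnMatching E M) (f : A ↪ A') (g : B ↪ B')
    (hE : ∀ a b, E a b → E' (f a) (g b)) : BipConnMatching E' (M.map (f.prodMap g)) := by
  refine ⟨⟨?_, ?_⟩, ?_⟩ <;> simp only [mem_map] at *
  · rintro _ ⟨e, he, rfl⟩
    exact hE _ _ (hM.1.1 e he)
  · rintro _ ⟨e, he, rfl⟩ _ ⟨e', he', rfl⟩ hne
    have := hM.1.2 e he e' he' (ne_of_apply_ne _ hne)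
    exact ⟨f.injective.ne this.1, g.injective.ne this.2⟩
  · rintro _ ⟨e, he, rfl⟩ _ ⟨e', he', rfl⟩ hne
    exact (hM.2 e he e' he' (ne_of_apply_ne _ hne)).imp (hE _ _) (hE _ _)

theorem BipConnMatching.preimage {E' : A' → B' → Prop} {M' : Finset (A' × B')}
    (hM' : BipConnMatching E' M') {f : A → A'} {g : B → B'} (hf : Injective f)
    (hg : Injective g) (hE : ∀ a b, E' (f a) (g b) → E a b) :
    BipConnMatching E (M'.preimage (Prod.map f g) (hf.prodMap hg).injOn) := by
  have hne {e e' : A × B} (h : e ≠ e') : Prod.map f g e ≠ Prod.map f g e' :=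
    (hf.prodMap hg).ne h
  refine ⟨⟨?_, ?_⟩, ?_⟩ <;> simp only [mem_preimage] at *
  · exact fun e he => hE _ _ (hM'.1.1 _ he)
  · exact fun e he e' he' h =>
      (hM'.1.2 _ he _ he' (hne h)).imp (mt (congrArg f)) (mt (congrArg g))
  · exact fun e he e' he' h => (hM'.2 _ he _ he' (hne h)).imp (hE _ _) (hE _ _)

theorem bipMatching_image_prodMk {ι : Type*} [DecidableEq A] [DecidableEq B] (s : Finset ι)
    {φ : ι → A} {ψ : ι → B} (hφ : Injective φ) (hψ : Injective ψ) (hE : ∀ i, E (φ i) (ψ i)) :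
    BipMatching E (s.image fun i => (φ i, ψ i)) := by
  refine ⟨?_, ?_⟩ <;> simp only [mem_image]
  · rintro _ ⟨i, -, rfl⟩
    exact hE i
  · rintro _ ⟨i, -, rfl⟩ _ ⟨j, -, rfl⟩ hne
    have hij : i ≠ j := fun h => hne (h ▸ rfl)
    exact ⟨hφ.ne hij, hψ.ne hij⟩

theorem BipConnMatching.union [DecidableEq A] [DecidableEq B] {M₁ M₂ : Finset (A × B)}
    (h₁ : BipConnMatching E M₁) (h₂ : BipMatching E M₂)
    (hfst : ∀ e ∈ M₁, ∀ f ∈ M₂, e.1 ≠ f.1) (hsnd : ∀ e ∈ M₁, ∀ f ∈ M₂, e.2 ≠ f.2)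
    (huniv : ∀ f ∈ M₂, ∀ e : A × B, E e.1 f.2 ∨ E f.1 e.2) :
    BipConnMatching E (M₁ ∪ M₂) := by
  refine ⟨⟨fun e he => ?_, fun e he f hf hne => ?_⟩, fun e he f hf hne => ?_⟩ <;>
    simp only [mem_union] at *
  · exact he.elim (h₁.1.1 e) (h₂.1 e)
  · rcases he with he | he <;> rcases hf with hf | hf
    · exact h₁.1.2 e he f hf hne
    · exact ⟨hfst e he f hf, hsnd e he f hf⟩
    · exact ⟨(hfst f hf e he).symm, (hsnd f hf e he).symm⟩
    · exact h₂.2 e he f hf hne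
  · rcases hf with hf | hf
    · exact (he.elim (fun he => h₁.2 e he f hf hne) fun he => (huniv e he f).symm)
    · exact huniv f hf e

end Matchings

theorem exists_fin_embedding_forall_notMem {α : Type*} [Fintype α] [DecidableEq α]
    (s : Finset α) {m : ℕ} (hm : s.card + m = Fintype.card α) :
    ∃ u : Fin m ↪ α, ∀ i, u i ∉ s := by
  obtain ⟨u⟩ := Function.Embedding.nonempty_of_card_le (α := Fin m) (β := ↥sᶜ)
    (by rw [Fintype.card_fin, Fintype.card_coe, card_compl]; omega)
  exact ⟨u.trans (Embedding.subtype _), fun i => mem_compl.1 (u i).2⟩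

section ExtGraph

variable {N k : ℕ} {EG : Fin N → Fin N → Prop}

@[simp] theorem extGraph_inr_left (i : Fin (N - k)) (y : Fin N ⊕ Fin (N - k)) :
    extGraph N k EG (.inr i) y := by
  cases y <;> trivial

@[simp] theorem extGraph_inr_right (x : Fin N ⊕ Fin (N - k)) (i : Fin (N - k)) :
    extGraph N k EG x (.inr i) := by
  cases x <;> trivial

theorem exists_extGraph_connMatching (hk : k ≤ N) {M : Finset (Fin N × Fin N)}
    (hM : BipConnMatching EG M) (hcard : M.card = k) :
    ∃ M', BipConnMatching (extGraph N k EG) M' ∧ M'.card = 2 * N - k := by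
  have hm {S : Finset (Fin N)} (hS : S.card = k) : S.card + (N - k) = Fintype.card (Fin N) := by
    rw [Fintype.card_fin]; omega
  obtain ⟨uA, huA⟩ := exists_fin_embedding_forall_notMem _
    (hm ((card_image_of_injOn hM.1.injOn_fst).trans hcard))
  obtain ⟨uB, huB⟩ := exists_fin_embedding_forall_notMem _
    (hm ((card_image_of_injOn hM.1.injOn_snd).trans hcard))
  -- indices `inl i` give the edges `uA i — b'ᵢ`, indices `inr i` the edges `a'ᵢ — uB i`
  set M₂ := (univ : Finset (Fin (N - k) ⊕ Fin (N - k))).image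
    fun i => (Sum.map uA id i, (Sum.map id uB i).swap)
  have hφ : Injective (Sum.map uA id : _ → Fin N ⊕ Fin (N - k)) :=
    Sum.map_injective.2 ⟨uA.injective, injective_id⟩
  have hψ : Injective fun i => (Sum.map id uB i : Fin (N - k) ⊕ Fin N).swap :=
    Sum.swap_leftInverse.injective.comp (Sum.map_injective.2 ⟨injective_id, uB.injective⟩)
  have hM₂ : BipMatching (extGraph N k EG) M₂ :=
    bipMatching_image_prodMk _ hφ hψ (by rintro (i | i) <;> simp)
  set M₁ : Finset ((Fin N ⊕ Fin (N - k)) × (Fin N ⊕ Fin (N - k))) :=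
    M.map (.prodMap .inl .inl)
  have hfst : ∀ e ∈ M₁, ∀ f ∈ M₂, e.1 ≠ f.1 := by
    simp only [M₁, M₂, mem_map, mem_image]
    rintro _ ⟨e, he, rfl⟩ _ ⟨i | i, -, rfl⟩ h
    · exact huA i (mem_image.2 ⟨e, he, Sum.inl_injective h⟩)
    · exact Sum.inl_ne_inr h
  have hsnd : ∀ e ∈ M₁, ∀ f ∈ M₂, e.2 ≠ f.2 := by
    simp only [M₁, M₂, mem_map, mem_image]
    rintro _ ⟨e, he, rfl⟩ _ ⟨i | i, -, rfl⟩ h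
    · exact Sum.inl_ne_inr h
    · exact huB i (mem_image.2 ⟨e, he, Sum.inl_injective h⟩)
  have huniv : ∀ f ∈ M₂, ∀ e : (Fin N ⊕ Fin (N - k)) × (Fin N ⊕ Fin (N - k)),
      extGraph N k EG e.1 f.2 ∨ extGraph N k EG f.1 e.2 := by
    simp only [M₂, mem_image]
    rintro _ ⟨i | i, -, rfl⟩ e <;> simp
  refine ⟨M₁ ∪ M₂, (hM.map .inl .inl fun _ _ => id).union hM₂ hfst hsnd huniv, ?_⟩
  rw [card_union_of_disjoint (disjoint_left.2 fun e he he' => hfst e he e he' rfl), card_map,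
    card_image_of_injective _ fun i j h => hφ (congrArg Prod.fst h), card_univ,
    Fintype.card_sum, Fintype.card_fin, hcard]
  omega

theorem exists_connMatching_of_extGraph (hk : k ≤ N)
    {M' : Finset ((Fin N ⊕ Fin (N - k)) × (Fin N ⊕ Fin (N - k)))}
    (hM' : BipConnMatching (extGraph N k EG) M') (hcard : M'.card = 2 * N - k) :
    ∃ M, BipConnMatching EG M ∧ M.card = k := by
  set P := M'.preimage (Prod.map Sum.inl Sum.inl)
    (Sum.inl_injective.prodMap Sum.inl_injective).injOn
  have hP : BipConnMatching EG P := hM'.preimage Sum.inl_injective Sum.inl_injective fun _ _ => id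
  set R : Finset (Fin N ⊕ Fin (N - k)) := univ.map .inr
  have hR : R.card = N - k := by simp [R]
  have hnotMem : ∀ e : (Fin N ⊕ Fin (N - k)) × (Fin N ⊕ Fin (N - k)),
      e ∉ Set.range (Prod.map Sum.inl Sum.inl) ↔ e.1 ∈ R ∨ e.2 ∈ R := by
    rintro ⟨a | i, b | j⟩ <;> simp [R]
  have houter : (M'.filter fun e => e.1 ∈ R ∨ e.2 ∈ R).card ≤ 2 * (N - k) := by
    rw [filter_or]
    have := card_union_le (M'.filter fun e => e.1 ∈ R) (M'.filter fun e => e.2 ∈ R)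
    have := hM'.1.card_filter_fst_mem_le R
    have := hM'.1.card_filter_snd_mem_le R
    omega
  have hPcard : k ≤ P.card := by
    have := card_filter_add_card_filter_not (s := M') (· ∈ Set.range (Prod.map Sum.inl Sum.inl))
    rw [filter_congr fun e _ => hnotMem e] at this
    rw [card_preimage]
    omega
  obtain ⟨M, hMP, hMcard⟩ := exists_subset_card_eq hPcard
  exact ⟨M, hP.mono hMP, hMcard⟩

end ExtGraph

theorem stmt4 (N k : ℕ) (hk : k ≤ N) (EG : Fin N → Fin N → Prop) :
    (∃ M : Finset (Fin N × Fin N), BipConnMatching EG M ∧ M.card = k) ↔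
    (∃ M' : Finset ((Fin N ⊕ Fin (N - k)) × (Fin N ⊕ Fin (N - k))),
      BipConnMatching (extGraph N k EG) M' ∧ M'.card = 2 * N - k) :=
  ⟨fun ⟨_, hM, hcard⟩ => exists_extGraph_connMatching hk hM hcard,
    fun ⟨_, hM', hcard⟩ => exists_connMatching_of_extGraph hk hM' hcard⟩
end

section
/- Let G = (A,B,E) be a balanced bipartite graph with girth g, and suppose there are t ∈ ℕ and β > 0 such that every vertex subset T with |T ∩ A| = |T ∩ B| ≤ s ≤ t spans at most (2 + β/g)s edges. Then α_{≤t}(G) ≥ 1/2 − (1+β)/g, i.e., every matching of size at most t in G contains an induced matching of at least a (1/2 − (1+β)/g) fraction of its edges. -/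
/-- A matching in a graph `G`, given as a finite set of ordered pairs of adjacent
vertices, pairwise vertex-disjoint. -/
def GMatching {V : Type*} (G : SimpleGraph V) (M : Finset (V × V)) : Prop :=
  (∀ e ∈ M, G.Adj e.1 e.2) ∧
  ∀ e ∈ M, ∀ f ∈ M, e ≠ f →
    e.1 ≠ f.1 ∧ e.1 ≠ f.2 ∧ e.2 ≠ f.1 ∧ e.2 ≠ f.2

/-- Two (disjoint) edges are joined by an edge of `G`. -/
def EdgeJoined {V : Type*} (G : SimpleGraph V) (e f : V × V) : Prop :=
  G.Adj e.1 f.1 ∨ G.Adj e.1 f.2 ∨ G.Adj e.2 f.1 ∨ G.Adj e.2 f.2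

/-- A connected matching: every two distinct edges are joined by an edge of `G`. -/
def GConnMatching {V : Type*} (G : SimpleGraph V) (M : Finset (V × V)) : Prop :=
  GMatching G M ∧ ∀ e ∈ M, ∀ f ∈ M, e ≠ f → EdgeJoined G e f

/-- An induced matching: no two distinct edges are joined by an edge of `G`. -/
def GInducedMatching {V : Type*} (G : SimpleGraph V) (M : Finset (V × V)) : Prop :=
  GMatching G M ∧ ∀ e ∈ M, ∀ f ∈ M, e ≠ f → ¬ EdgeJoined G e f

/-!
Work in the conflict graph on the edges of the matching `M`, in which two edges are adjacent
when an edge of `G` joins them; induced submatchings of `M` are its independent sets. An edge of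
conflict degree at most one is peeled off together with its neighbour, keeping one edge out of at
most two. Once all conflict degrees are at least two, counting the edges spanned by the vertices
of `M` against the sparseness hypothesis shows that at most a `2β/g` fraction of `M` has conflict
degree three or more. The other edges have conflict degree at most two, so their conflict graph
is a union of paths and cycles, and a conflict cycle of length `ℓ` threads a cycle of length at
most `2ℓ` through `G`, whence `ℓ ≥ g/2`. Every other edge along these paths and cycles is kept,
and `(1 - 2β/g) (1 - 2/g) / 2 ≥ 1/2 - (1+β)/g`.
-/

open Finset

theorem Finset.card_filter_lt_le_sum_sub {ι : Type*} (s : Finset ι) (d : ι → ℕ) (k : ℕ)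
    (h : ∀ i ∈ s, k ≤ d i) : (#{i ∈ s | k < d i} : ℝ) ≤ ∑ i ∈ s, (d i : ℝ) - k * #s := by
  rw [card_filter, Nat.cast_sum, mul_comm, ← nsmul_eq_mul, ← sum_const, ← sum_sub_distrib]
  refine sum_le_sum fun i hi => ?_
  split_ifs with hlt
  · have : (k : ℝ) + 1 ≤ d i := by exact_mod_cast hlt
    push_cast
    linarith
  · have : (k : ℝ) ≤ d i := by exact_mod_cast h i hi
    push_cast
    linarith

namespace SimpleGraph

variable {α : Type*} [DecidableEq α] (H : SimpleGraph α)

def IsPeelable (c : ℝ) (M P : Finset α) : Prop :=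
  P ⊆ M ∧ P.Nonempty ∧ ∃ I ⊆ P, H.IsIndepSet (I : Set α) ∧
    (∀ x ∈ I, ∀ y ∈ M \ P, ¬ H.Adj x y) ∧ c * #P ≤ #I

theorem exists_isIndepSet_of_forall_exists_isPeelable (c : ℝ) (M₀ : Finset α)
    (hpeel : ∀ M ⊆ M₀, M.Nonempty → ∃ P, H.IsPeelable c M P) :
    ∃ I ⊆ M₀, H.IsIndepSet (I : Set α) ∧ c * #M₀ ≤ #I := by
  suffices ∀ M ⊆ M₀, ∃ I ⊆ M, H.IsIndepSet (I : Set α) ∧ c * #M ≤ #I from this M₀ subset_rfl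
  intro M
  induction M using Finset.strongInduction with
  | H M ih =>
    intro hM
    rcases M.eq_empty_or_nonempty with rfl | hne
    · exact ⟨∅, subset_rfl, by simp, by simp⟩
    obtain ⟨P, ⟨hPM, hPne, I, hIP, hI, hsep, hcard⟩⟩ := hpeel M hM hne
    obtain ⟨J, hJ, hJind, hJcard⟩ :=
      ih (M \ P) (sdiff_ssubset hPM hPne) (sdiff_subset.trans hM)
    have hdisj : Disjoint I J :=
      disjoint_of_subset_left hIP (disjoint_of_subset_right hJ disjoint_sdiff)
    refine ⟨I ∪ J, union_subset (hIP.trans hPM) (hJ.trans sdiff_subset), ?_, ?_⟩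
    · intro x hx y hy hxy hadj
      simp only [coe_union, Set.mem_union, mem_coe] at hx hy
      rcases hx with hx | hx <;> rcases hy with hy | hy
      · exact hI hx hy hxy hadj
      · exact hsep x hx y (hJ hy) hadj
      · exact hsep y hy x (hJ hx) hadj.symm
      · exact hJind hx hy hxy hadj
    · rw [card_union_of_disjoint hdisj, ← card_sdiff_add_card_eq_card hPM]
      push_cast
      linarith

variable {H} [DecidableRel H.Adj]

theorem isPeelable_of_degree_le_one {c : ℝ} (hc : c ≤ 1 / 2) {M : Finset α} {e : α}
    (he : e ∈ M) (hdeg : #{f ∈ M | H.Adj e f} ≤ 1) :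
    H.IsPeelable c M (insert e {f ∈ M | H.Adj e f}) := by
  refine ⟨insert_subset he (filter_subset _ _), insert_nonempty _ _, {e},
    singleton_subset_iff.mpr (mem_insert_self _ _), by simp, ?_, ?_⟩
  · intro x hx y hy hxy
    rw [mem_singleton] at hx
    subst hx
    exact (mem_sdiff.mp hy).2 (mem_insert_of_mem (mem_filter.mpr ⟨(mem_sdiff.mp hy).1, hxy⟩))
  · have h2 : (#(insert e {f ∈ M | H.Adj e f}) : ℝ) ≤ 2 := by
      exact_mod_cast (card_insert_le _ _).trans (by omega)
    rw [card_singleton, Nat.cast_one]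
    nlinarith [(#(insert e {f ∈ M | H.Adj e f})).cast_nonneg (α := ℝ)]

variable (H) in
structure IsCycleList (l : List α) : Prop where
  nodup : l.Nodup
  three_le_length : 3 ≤ l.length
  adj : ∀ i j (hi : i < l.length) (hj : j < l.length),
    j = i + 1 ∨ i + 1 = l.length ∧ j = 0 → H.Adj l[i] l[j]

theorem IsCycleList.exists_eq_getElem_of_adj {l : List α} (hl : H.IsCycleList l)
    {M : Finset α} (hlM : ∀ x ∈ l, x ∈ M) (hdeg : ∀ x ∈ M, #{y ∈ M | H.Adj x y} ≤ 2)
    {i : ℕ} (hi : i < l.length) {y : α} (hy : y ∈ M) (hadj : H.Adj l[i] y) :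
    ∃ j, ∃ hj : j < l.length, y = l[j] ∧
      (j = i + 1 ∨ i + 1 = l.length ∧ j = 0 ∨ i = j + 1 ∨ j + 1 = l.length ∧ i = 0) := by
  have h3 := hl.three_le_length
  obtain ⟨n, hn, hnrel⟩ : ∃ n, ∃ _ : n < l.length, n = i + 1 ∨ i + 1 = l.length ∧ n = 0 := by
    by_cases h : i + 1 < l.length
    · exact ⟨i + 1, h, Or.inl rfl⟩
    · exact ⟨0, by omega, Or.inr ⟨by omega, rfl⟩⟩
  obtain ⟨p, hp, hprel⟩ : ∃ p, ∃ _ : p < l.length, i = p + 1 ∨ p + 1 = l.length ∧ i = 0 := by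
    by_cases h : i = 0
    · exact ⟨l.length - 1, by omega, Or.inr ⟨by omega, h⟩⟩
    · exact ⟨i - 1, by omega, Or.inl (by omega)⟩
  have hpn : l[p] ≠ l[n] := fun h => by
    have := hl.nodup.getElem_inj_iff.mp h
    omega
  have hsub : ({l[p], l[n]} : Finset α) ⊆ {z ∈ M | H.Adj l[i] z} := by
    intro z hz
    simp only [mem_insert, mem_singleton] at hz
    rcases hz with rfl | rfl
    · exact mem_filter.mpr ⟨hlM _ (List.getElem_mem _), (hl.adj p i hp hi hprel).symm⟩
    · exact mem_filter.mpr ⟨hlM _ (List.getElem_mem _), hl.adj i n hi hn hnrel⟩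
  have heq := eq_of_subset_of_card_le hsub
    ((hdeg _ (hlM _ (List.getElem_mem _))).trans (card_pair hpn).ge)
  have hyp : y ∈ ({l[p], l[n]} : Finset α) := heq ▸ mem_filter.mpr ⟨hy, hadj⟩
  simp only [mem_insert, mem_singleton] at hyp
  rcases hyp with rfl | rfl
  · exact ⟨p, hp, rfl, by omega⟩
  · exact ⟨n, hn, rfl, by omega⟩

theorem IsCycleList.isPeelable {l : List α} (hl : H.IsCycleList l)
    {M : Finset α} (hlM : ∀ x ∈ l, x ∈ M) (hdeg : ∀ x ∈ M, #{y ∈ M | H.Adj x y} ≤ 2)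
    {L : ℝ} (hL : 0 < L) (hlen : L ≤ l.length) :
    H.IsPeelable ((1 - 1 / L) / 2) M l.toFinset := by
  have h3 := hl.three_le_length
  obtain ⟨x₀, hx₀⟩ := List.exists_mem_of_length_pos (by omega : 0 < l.length)
  -- every other entry, stopping short of the last one, which is adjacent to the first
  set I := (range (l.length / 2)).image (fun k => l.getD (2 * k) x₀) with hI
  have hmemI : ∀ x ∈ I, ∃ k, ∃ hk : 2 * k + 1 < l.length, x = l[2 * k] := by
    intro x hx
    obtain ⟨k, hk, rfl⟩ := mem_image.mp hx
    have hk' : 2 * k + 1 < l.length := by rw [mem_range] at hk; omega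
    exact ⟨k, hk', List.getD_eq_getElem _ _ (by omega)⟩
  have hIcard : #I = l.length / 2 := by
    rw [hI, card_image_of_injOn, card_range]
    intro a ha b hb hab
    simp only [coe_range, Set.mem_Iio] at ha hb
    simp only [List.getD_eq_getElem _ _ (show 2 * a < l.length by omega),
      List.getD_eq_getElem _ _ (show 2 * b < l.length by omega)] at hab
    have := hl.nodup.getElem_inj_iff.mp hab
    omega
  refine ⟨fun x hx => hlM x (List.mem_toFinset.mp hx), ⟨x₀, List.mem_toFinset.mpr hx₀⟩, I,
    ?_, ?_, ?_, ?_⟩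
  · intro x hx
    obtain ⟨k, hk, rfl⟩ := hmemI x hx
    exact List.mem_toFinset.mpr (List.getElem_mem _)
  · intro x hx y hy _ hxy
    obtain ⟨a, ha, rfl⟩ := hmemI x hx
    obtain ⟨b, hb, rfl⟩ := hmemI y hy
    obtain ⟨j, hj, hbj, hrel⟩ :=
      hl.exists_eq_getElem_of_adj hlM hdeg (by omega) (hlM _ (List.getElem_mem _)) hxy
    have := hl.nodup.getElem_inj_iff.mp hbj
    omega
  · intro x hx y hy hxy
    obtain ⟨a, ha, rfl⟩ := hmemI x hx
    obtain ⟨hyM, hyl⟩ := mem_sdiff.mp hy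
    obtain ⟨j, hj, rfl, -⟩ := hl.exists_eq_getElem_of_adj hlM hdeg (by omega) hyM hxy
    exact hyl (List.mem_toFinset.mpr (List.getElem_mem _))
  · rw [List.toFinset_card_of_nodup hl.nodup, hIcard]
    have hhalf : (l.length : ℝ) - 1 ≤ 2 * ((l.length / 2 : ℕ) : ℝ) := by
      have : l.length ≤ 2 * (l.length / 2) + 1 := by omega
      have : (l.length : ℝ) ≤ 2 * ((l.length / 2 : ℕ) : ℝ) + 1 := by exact_mod_cast this
      linarith
    have hone : 1 ≤ (l.length : ℝ) / L := (one_le_div hL).mpr hlen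
    have : (1 - 1 / L) / 2 * l.length = (l.length - l.length / L) / 2 := by ring
    rw [this]
    linarith

theorem exists_isCycleList_of_isChain {M : Finset α}
    (hdeg : ∀ x ∈ M, 2 ≤ #{y ∈ M | H.Adj x y}) (x : α) (rest : List α) (hnd : (x :: rest).Nodup)
    (hch : (x :: rest).IsChain H.Adj) (hpM : ∀ z ∈ x :: rest, z ∈ M) :
    ∃ l, H.IsCycleList l ∧ ∀ x ∈ l, x ∈ M := by
  obtain ⟨y, hy, hyne⟩ := exists_mem_ne (hdeg x (hpM x List.mem_cons_self)) (rest.headD x)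
  obtain ⟨hyM, hxy⟩ := mem_filter.mp hy
  by_cases hyp : y ∈ x :: rest
  · -- close the cycle at the earlier occurrence of `y`
    obtain ⟨i, hi, rfl⟩ := List.getElem_of_mem hyp
    have hi0 : i ≠ 0 := by
      rintro rfl
      exact hxy.ne rfl
    have hi1 : i ≠ 1 := by
      rintro rfl
      obtain ⟨z, rest', rfl⟩ :=
        List.exists_cons_of_ne_nil (show rest ≠ [] by rintro rfl; simp at hi)
      exact hyne rfl
    refine ⟨(x :: rest).take (i + 1), ⟨hnd.sublist (List.take_sublist _ _), ?_, ?_⟩,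
      fun z hz => hpM z (List.mem_of_mem_take hz)⟩
    · simp only [List.length_take]
      omega
    · intro j k hj hk hjk
      simp only [List.length_take] at hj hk hjk
      simp only [List.getElem_take]
      rcases hjk with rfl | ⟨hj', rfl⟩
      · exact List.isChain_iff_getElem.mp hch j (by omega)
      · obtain rfl : j = i := by omega
        exact hxy.symm
  · exact exists_isCycleList_of_isChain hdeg y (x :: rest)
      (List.nodup_cons.mpr ⟨hyp, hnd⟩) (List.isChain_cons_cons.mpr ⟨hxy.symm, hch⟩)
      (fun z hz => (List.mem_cons.mp hz).elim (fun h => h ▸ hyM) (hpM z))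
termination_by #M - rest.length
decreasing_by
  classical
  have hsub : (y :: x :: rest).toFinset ⊆ M := by
    intro z hz
    rcases List.mem_cons.mp (List.mem_toFinset.mp hz) with rfl | hz
    exacts [hyM, hpM z hz]
  have := card_le_card hsub
  rw [List.toFinset_card_of_nodup (List.nodup_cons.mpr ⟨hyp, hnd⟩)] at this
  simp only [List.length_cons] at this ⊢
  omega

theorem exists_isCycleList_of_two_le_degree {M : Finset α} (hne : M.Nonempty)
    (hdeg : ∀ x ∈ M, 2 ≤ #{y ∈ M | H.Adj x y}) : ∃ l, H.IsCycleList l ∧ ∀ x ∈ l, x ∈ M :=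
  let ⟨x, hx⟩ := hne
  exists_isCycleList_of_isChain hdeg x [] (List.nodup_singleton x)
    (List.isChain_singleton x) (by simpa using hx)

theorem exists_isIndepSet_of_degree_le_two {M₀ : Finset α}
    (hdeg : ∀ x ∈ M₀, #{y ∈ M₀ | H.Adj x y} ≤ 2) {L : ℝ} (hL : 0 < L)
    (hcyc : ∀ l, H.IsCycleList l → (∀ x ∈ l, x ∈ M₀) → L ≤ l.length) :
    ∃ I ⊆ M₀, H.IsIndepSet (I : Set α) ∧ (1 - 1 / L) / 2 * #M₀ ≤ #I := by
  refine H.exists_isIndepSet_of_forall_exists_isPeelable _ M₀ fun M hM hne => ?_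
  have hdegM : ∀ x ∈ M, #{y ∈ M | H.Adj x y} ≤ 2 := fun x hx =>
    (card_le_card (filter_subset_filter _ hM)).trans (hdeg x (hM hx))
  by_cases hlow : ∃ e ∈ M, #{f ∈ M | H.Adj e f} ≤ 1
  · obtain ⟨e, he, hde⟩ := hlow
    have : 0 ≤ 1 / L := by positivity
    exact ⟨_, isPeelable_of_degree_le_one (by linarith) he hde⟩
  · push Not at hlow
    obtain ⟨l, hl, hlM⟩ := exists_isCycleList_of_two_le_degree hne hlow
    exact ⟨_, hl.isPeelable hlM hdegM hL (hcyc l hl fun x hx => hM (hlM x hx))⟩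

end SimpleGraph

section Matching

open SimpleGraph

variable {V : Type*} {G : SimpleGraph V}

theorem EdgeJoined.symm {e f : V × V} (h : EdgeJoined G e f) : EdgeJoined G f e := by
  rcases h with h | h | h | h
  exacts [Or.inl h.symm, Or.inr (Or.inr (Or.inl h.symm)), Or.inr (Or.inl h.symm),
    Or.inr (Or.inr (Or.inr h.symm))]

variable (G) in
/-- Two edges of `G` conflict when they cannot both belong to an induced matching. -/
def conflictGraph : SimpleGraph (V × V) where
  Adj e f := e ≠ f ∧ EdgeJoined G e f
  symm := ⟨fun _ _ h => ⟨h.1.symm, h.2.symm⟩⟩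
  loopless := ⟨fun _ h => h.1 rfl⟩

noncomputable instance : DecidableRel (conflictGraph G).Adj := Classical.decRel _

theorem GMatching.mono {M M' : Finset (V × V)} (hM : GMatching G M) (h : M' ⊆ M) :
    GMatching G M' :=
  ⟨fun e he => hM.1 e (h he), fun e he f hf => hM.2 e (h he) f (h hf)⟩

theorem GMatching.gInducedMatching_of_isIndepSet {M I : Finset (V × V)} (hM : GMatching G M) (hIM : I ⊆ M)
    (hI : (conflictGraph G).IsIndepSet (I : Set (V × V))) : GInducedMatching G I :=
  ⟨hM.mono hIM, fun _ he _ hf hef hj => hI he hf hef ⟨hef, hj⟩⟩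

variable [DecidableEq V]

def endpoints (e : V × V) : Finset V := {e.1, e.2}

@[simp] theorem mem_endpoints {e : V × V} {v : V} : v ∈ endpoints e ↔ v = e.1 ∨ v = e.2 := by
  simp [endpoints]

theorem EdgeJoined.exists_adj {e f : V × V} (h : EdgeJoined G e f) :
    ∃ u ∈ endpoints e, ∃ v ∈ endpoints f, G.Adj u v := by
  rcases h with h | h | h | h <;> exact ⟨_, by simp, _, by simp, h⟩

theorem GMatching.eq_of_mem_endpoints {M : Finset (V × V)} (hM : GMatching G M) {e f : V × V}
    (he : e ∈ M) (hf : f ∈ M) {v : V} (hve : v ∈ endpoints e) (hvf : v ∈ endpoints f) :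
    e = f := by
  by_contra hne
  obtain ⟨h1, h2, h3, h4⟩ := hM.2 e he f hf hne
  rw [mem_endpoints] at hve hvf
  rcases hve with rfl | rfl <;> rcases hvf with h | h <;> simp_all

theorem exists_walk_of_mem_endpoints {e : V × V} (h : G.Adj e.1 e.2) {y z : V}
    (hy : y ∈ endpoints e) (hz : z ∈ endpoints e) :
    ∃ w : G.Walk y z, w.length ≤ 1 ∧ ∀ s ∈ w.edges, ∀ v ∈ s, v ∈ endpoints e := by
  by_cases hyz : y = z
  · subst hyz
    exact ⟨.nil, by simp, by simp⟩
  have hadj : G.Adj y z := by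
    rw [mem_endpoints] at hy hz
    rcases hy with rfl | rfl <;> rcases hz with rfl | rfl
    exacts [absurd rfl hyz, h, h.symm, absurd rfl hyz]
  refine ⟨hadj.toWalk, by simp, fun s hs v hv => ?_⟩
  simp only [Adj.toWalk, Walk.edges_cons, Walk.edges_nil, List.mem_singleton] at hs
  subst hs
  rcases Sym2.mem_iff.mp hv with rfl | rfl
  exacts [hy, hz]

theorem exists_walk_of_isChain_edgeJoined :
    ∀ (L : List (V × V)) (hL : L ≠ []), (∀ f ∈ L, G.Adj f.1 f.2) → L.IsChain (EdgeJoined G) →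
    ∀ {y z : V}, y ∈ endpoints (L.head hL) → z ∈ endpoints (L.getLast hL) →
    ∃ w : G.Walk y z, w.length + 1 ≤ 2 * L.length ∧
      ∀ s ∈ w.edges, ∀ v ∈ s, ∃ f ∈ L, v ∈ endpoints f
  | [e], _, hadj, _, y, z, hy, hz => by
    obtain ⟨w, hw, hwe⟩ := exists_walk_of_mem_endpoints (hadj e (by simp)) hy hz
    exact ⟨w, by simp; omega, fun s hs v hv => ⟨e, by simp, hwe s hs v hv⟩⟩
  | e :: e' :: L, _, hadj, hch, y, z, hy, hz => by
    obtain ⟨hee', hch'⟩ := List.isChain_cons_cons.mp hch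
    obtain ⟨u, hu, v, hv, huv⟩ := hee'.exists_adj
    obtain ⟨w₁, hw₁, hw₁e⟩ := exists_walk_of_mem_endpoints (hadj e (by simp)) hy hu
    obtain ⟨w₂, hw₂, hw₂e⟩ := exists_walk_of_isChain_edgeJoined (e' :: L) (List.cons_ne_nil _ _)
      (fun f hf => hadj f (List.mem_cons_of_mem _ hf)) hch' hv (by simpa using hz)
    refine ⟨w₁.append (.cons huv w₂), ?_, ?_⟩
    · simp only [Walk.length_append, Walk.length_cons, List.length_cons] at hw₂ ⊢
      omega
    · intro s hs x hx
      simp only [Walk.edges_append, Walk.edges_cons, List.mem_append, List.mem_cons] at hs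
      rcases hs with hs | rfl | hs
      · exact ⟨e, by simp, hw₁e s hs x hx⟩
      · rcases Sym2.mem_iff.mp hx with rfl | rfl
        exacts [⟨e, by simp, hu⟩, ⟨e', by simp, hv⟩]
      · obtain ⟨f, hf, hxf⟩ := hw₂e s hs x hx
        exact ⟨f, List.mem_cons_of_mem _ hf, hxf⟩

theorem SimpleGraph.egirth_le_of_adj_of_notMem_edges {a b : V} (hab : G.Adj a b)
    (W : G.Walk b a) (hW : s(a, b) ∉ W.edges) : G.egirth ≤ (W.length + 1 : ℕ) := by
  have hcyc := Path.cons_isCycle W.toPath hab fun h => hW (W.edges_bypass_subset_edges h)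
  refine (egirth_le_length hcyc).trans ?_
  exact_mod_cast Nat.succ_le_succ W.length_bypass_le_length

theorem GMatching.egirth_le_of_isCycleList {M : Finset (V × V)} (hM : GMatching G M)
    {l : List (V × V)} (hl : (conflictGraph G).IsCycleList l) (hlM : ∀ e ∈ l, e ∈ M) :
    G.egirth ≤ (2 * l.length : ℕ) := by
  have h3 := hl.three_le_length
  obtain ⟨f₀, rest, rfl⟩ :=
    List.exists_cons_of_ne_nil (List.ne_nil_of_length_pos (show 0 < l.length by omega))
  simp only [List.length_cons] at h3 ⊢
  have hrest : rest ≠ [] := List.ne_nil_of_length_pos (by omega)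
  have hf₀M : f₀ ∈ M := hlM f₀ List.mem_cons_self
  have hrestM : ∀ f ∈ rest, f ∈ M := fun f hf => hlM f (List.mem_cons_of_mem _ hf)
  have hfirst : (conflictGraph G).Adj f₀ (rest.head hrest) := by
    rw [List.head_eq_getElem]
    exact hl.adj 0 1 (by simp) (by simp; omega) (Or.inl rfl)
  have hlast : (conflictGraph G).Adj (rest.getLast hrest) f₀ := by
    have := hl.adj rest.length 0 (by simp) (by simp) (Or.inr ⟨by simp, rfl⟩)
    rwa [List.getElem_cons, dif_neg (by omega), ← List.getLast_eq_getElem] at this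
  have hch : rest.IsChain (EdgeJoined G) := List.isChain_iff_getElem.mpr fun i hi =>
    (hl.adj (i + 1) (i + 2) (by simp; omega) (by simp; omega) (Or.inl rfl)).2
  obtain ⟨a, ha, b, hb, hab⟩ := hfirst.2.exists_adj
  obtain ⟨x, hx, a', ha', hxa'⟩ := hlast.2.exists_adj
  obtain ⟨w₁, hw₁, hw₁e⟩ := exists_walk_of_isChain_edgeJoined rest hrest
    (fun f hf => hM.1 f (hrestM f hf)) hch hb hx
  obtain ⟨w₂, hw₂, hw₂e⟩ := exists_walk_of_mem_endpoints (hM.1 f₀ hf₀M) ha' ha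
  -- `W` runs from `b` through the other edges of the cycle back to `a`, avoiding the edge `ab`
  let W : G.Walk b a := w₁.append (.cons hxa' w₂)
  have ha_rest : ∀ f ∈ rest, a ∉ endpoints f := fun f hf haf =>
    (List.nodup_cons.mp hl.nodup).1 (hM.eq_of_mem_endpoints hf₀M (hrestM f hf) ha haf ▸ hf)
  have hb_f₀ : b ∉ endpoints f₀ := fun hbf =>
    ha_rest _ (List.head_mem hrest) (hM.eq_of_mem_endpoints hf₀M (hrestM _ (List.head_mem hrest))
      hbf hb ▸ ha)
  have hb_last : b ∉ endpoints (rest.getLast hrest) := fun hbl => by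
    have := hM.eq_of_mem_endpoints (hrestM _ (List.head_mem hrest))
      (hrestM _ (List.getLast_mem hrest)) hb hbl
    rw [List.head_eq_getElem, List.getLast_eq_getElem,
      (List.nodup_cons.mp hl.nodup).2.getElem_inj_iff] at this
    omega
  have hab_W : s(a, b) ∉ W.edges := by
    simp only [W, Walk.edges_append, Walk.edges_cons, List.mem_append, List.mem_cons, not_or]
    refine ⟨fun hs => ?_, fun hs => ?_, fun hs => hb_f₀ (hw₂e _ hs b (Sym2.mem_mk_right a b))⟩
    · obtain ⟨f, hf, haf⟩ := hw₁e _ hs a (Sym2.mem_mk_left a b)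
      exact ha_rest f hf haf
    · rcases Sym2.eq_iff.mp hs with ⟨rfl, -⟩ | ⟨-, rfl⟩
      exacts [ha_rest _ (List.getLast_mem hrest) hx, hb_last hx]
  have hW : W.length = w₁.length + (w₂.length + 1) := by simp [W, Walk.length_append]
  refine (egirth_le_of_adj_of_notMem_edges hab W hab_W).trans ?_
  exact_mod_cast (show W.length + 1 ≤ 2 * (rest.length + 1) by omega)

end Matching

section Counting

open SimpleGraph

variable {V : Type*} [DecidableEq V] {G : SimpleGraph V} {M : Finset (V × V)}

theorem GMatching.card_filter_biUnion_endpoints (hM : GMatching G M) (p : V → Prop)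
    [DecidablePred p] (hp : ∀ e ∈ M, (p e.1 ↔ ¬ p e.2)) :
    #{v ∈ M.biUnion endpoints | p v} = #M := by
  rw [filter_biUnion, card_biUnion, card_eq_sum_ones]
  · refine sum_congr rfl fun e he => ?_
    have hne : e.1 ≠ e.2 := (hM.1 e he).ne
    by_cases h : p e.1
    · simp [endpoints, filter_insert, filter_singleton, h, (hp e he).mp h]
    · simp [endpoints, filter_insert, filter_singleton, h, not_not.mp (mt (hp e he).mpr h)]
  · intro e he f hf hef
    simp only [Function.onFun]
    exact disjoint_filter_filter (disjoint_left.mpr fun v hve hvf =>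
      hef (hM.eq_of_mem_endpoints he hf hve hvf))

theorem GMatching.two_mul_card_add_sum_degree_le [DecidableRel G.Adj] (hM : GMatching G M) :
    2 * #M + ∑ e ∈ M, #{f ∈ M | (conflictGraph G).Adj e f} ≤
      #{q ∈ M.biUnion endpoints ×ˢ M.biUnion endpoints | G.Adj q.1 q.2} := by
  -- a matching edge joins itself in two ordered pairs, and a conflict contributes at least one
  let A : (V × V) × (V × V) → Finset (V × V) := fun p =>
    {q ∈ endpoints p.1 ×ˢ endpoints p.2 | G.Adj q.1 q.2}
  have hA : ∀ p ∈ M ×ˢ M,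
      (if p.1 = p.2 then 2 else 0) + (if (conflictGraph G).Adj p.1 p.2 then 1 else 0) ≤ #(A p) := by
    rintro ⟨e, f⟩ hp
    obtain ⟨he, hf⟩ := mem_product.mp hp
    dsimp only
    by_cases hef : e = f
    · subst hef
      have hne : e.1 ≠ e.2 := (hM.1 e he).ne
      have hsub : {(e.1, e.2), (e.2, e.1)} ⊆ A (e, e) := by
        intro q hq
        simp only [mem_insert, mem_singleton] at hq
        rcases hq with rfl | rfl <;> simp [A, endpoints, hM.1 e he, (hM.1 e he).symm]
      have := card_le_card hsub
      rw [card_pair (by simp [Prod.ext_iff, hne])] at this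
      simpa using this
    · rw [if_neg hef, zero_add]
      split_ifs with hadj
      · obtain ⟨u, hu, v, hv, huv⟩ := hadj.2.exists_adj
        exact card_pos.mpr ⟨(u, v), by simp [A, hu, hv, huv]⟩
      · exact Nat.zero_le _
  have hdisj : ((M ×ˢ M : Finset _) : Set _).PairwiseDisjoint A := by
    rintro ⟨e, f⟩ hp ⟨e', f'⟩ hp' hne
    simp only [coe_product, Set.mem_prod, mem_coe] at hp hp'
    refine Function.onFun_apply .. ▸ disjoint_left.mpr fun q hq hq' => hne ?_
    simp only [A, mem_filter, mem_product] at hq hq'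
    rw [hM.eq_of_mem_endpoints hp.1 hp'.1 hq.1.1 hq'.1.1,
      hM.eq_of_mem_endpoints hp.2 hp'.2 hq.1.2 hq'.1.2]
  have hsub : (M ×ˢ M).biUnion A ⊆
      {q ∈ M.biUnion endpoints ×ˢ M.biUnion endpoints | G.Adj q.1 q.2} := by
    intro q hq
    obtain ⟨⟨e, f⟩, hp, hq⟩ := mem_biUnion.mp hq
    simp only [A, mem_filter, mem_product] at hp hq ⊢
    exact ⟨⟨mem_biUnion.mpr ⟨e, hp.1, hq.1.1⟩, mem_biUnion.mpr ⟨f, hp.2, hq.1.2⟩⟩, hq.2⟩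
  calc 2 * #M + ∑ e ∈ M, #{f ∈ M | (conflictGraph G).Adj e f}
      = ∑ p ∈ M ×ˢ M,
          ((if p.1 = p.2 then 2 else 0) + (if (conflictGraph G).Adj p.1 p.2 then 1 else 0)) := by
        rw [sum_add_distrib, sum_product, sum_product]
        congr 1
        · simp [sum_ite_eq, mul_comm]
        · exact sum_congr rfl fun e _ => card_filter _ _
    _ ≤ ∑ p ∈ M ×ˢ M, #(A p) := sum_le_sum hA
    _ = #((M ×ˢ M).biUnion A) := (card_biUnion hdisj).symm
    _ ≤ _ := card_le_card hsub

end Counting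

section Bipartite

open SimpleGraph

/-- Adjacent pairs are counted as ordered pairs, so this bounds the number of edges spanned
by a set with `s ≤ t` vertices on each side by `c * s`. -/
def SimpleGraph.IsBalancedSparse {n : ℕ} (G : SimpleGraph (Fin n ⊕ Fin n)) [DecidableRel G.Adj]
    (t : ℕ) (c : ℝ) : Prop :=
  ∀ T : Finset (Fin n ⊕ Fin n),
    (T.filter (fun v => v.isLeft)).card = (T.filter (fun v => v.isRight)).card →
    (T.filter (fun v => v.isLeft)).card ≤ t →
    ((((T ×ˢ T).filter (fun p => G.Adj p.1 p.2)).card : ℝ)) ≤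
      2 * c * ((T.filter (fun v => v.isLeft)).card : ℝ)

variable {n : ℕ} {G : SimpleGraph (Fin n ⊕ Fin n)} [DecidableRel G.Adj]

theorem GMatching.sum_degree_le_of_isBalancedSparse
    (hbip : ∀ a b : Fin n ⊕ Fin n, G.Adj a b → a.isLeft ≠ b.isLeft) {t : ℕ} {c : ℝ}
    (hsparse : G.IsBalancedSparse t c) {M : Finset ((Fin n ⊕ Fin n) × (Fin n ⊕ Fin n))}
    (hM : GMatching G M) (hMt : #M ≤ t) :
    ∑ e ∈ M, (#{f ∈ M | (conflictGraph G).Adj e f} : ℝ) ≤ (2 * c - 2) * #M := by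
  have hcross : ∀ e ∈ M, e.1.isLeft ≠ e.2.isLeft := fun e he => hbip _ _ (hM.1 e he)
  have hleft := hM.card_filter_biUnion_endpoints (fun v => v.isLeft) fun e he => by
    have := hcross e he
    revert this
    cases e.1.isLeft <;> cases e.2.isLeft <;> simp
  have hright := hM.card_filter_biUnion_endpoints (fun v => v.isRight) fun e he => by
    have := hcross e he
    rw [← Sum.not_isLeft, ← Sum.not_isLeft]
    revert this
    cases e.1.isLeft <;> cases e.2.isLeft <;> simp
  have hpairs := hsparse (M.biUnion endpoints) (hleft.trans hright.symm) (hleft ▸ hMt)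
  rw [hleft] at hpairs
  have hcount : ((2 * #M + ∑ e ∈ M, #{f ∈ M | (conflictGraph G).Adj e f} : ℕ) : ℝ) ≤ _ :=
    Nat.cast_le.mpr hM.two_mul_card_add_sum_degree_le
  push_cast at hcount
  linarith

theorem GMatching.exists_isIndepSet_of_two_le_degree
    (hbip : ∀ a b : Fin n ⊕ Fin n, G.Adj a b → a.isLeft ≠ b.isLeft) {g : ℕ}
    (hgirth : G.egirth = g) {t : ℕ} {β : ℝ} (hβ : 0 ≤ β)
    (hsparse : G.IsBalancedSparse t (2 + β / g))
    {M : Finset ((Fin n ⊕ Fin n) × (Fin n ⊕ Fin n))} (hM : GMatching G M) (hMt : #M ≤ t)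
    (hdeg : ∀ e ∈ M, 2 ≤ #{f ∈ M | (conflictGraph G).Adj e f}) :
    ∃ I ⊆ M, (conflictGraph G).IsIndepSet (I : Set _) ∧ (1 / 2 - (1 + β) / g) * #M ≤ #I := by
  have hg : (3 : ℝ) ≤ g := by
    have := G.three_le_egirth
    rw [hgirth] at this
    exact_mod_cast this
  set deg := fun e => #{f ∈ M | (conflictGraph G).Adj e f}
  set M₂ := {e ∈ M | deg e ≤ 2}
  have hM₂ : M₂ ⊆ M := filter_subset _ _
  obtain ⟨I, hIM₂, hI, hIcard⟩ := exists_isIndepSet_of_degree_le_two (M₀ := M₂)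
    (fun e he => (card_le_card (filter_subset_filter _ hM₂)).trans (mem_filter.mp he).2)
    (L := g / 2) (by positivity) fun l hl hlM => by
      have := (hM.mono hM₂).egirth_le_of_isCycleList hl hlM
      rw [hgirth] at this
      have : (g : ℝ) ≤ 2 * l.length := by exact_mod_cast this
      linarith
  refine ⟨I, hIM₂.trans hM₂, hI, ?_⟩
  -- only the edges of conflict degree at least `3` are lost, and sparseness makes them few
  have hhigh : (#{e ∈ M | 2 < deg e} : ℝ) ≤ 2 * (β / g) * #M := by
    have := hM.sum_degree_le_of_isBalancedSparse hbip hsparse hMt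
    have := card_filter_lt_le_sum_sub M deg 2 hdeg
    push_cast at this
    linarith
  have hsplit : (#M₂ : ℝ) + #{e ∈ M | 2 < deg e} = #M := by
    have := card_filter_add_card_filter_not (s := M) (fun e => deg e ≤ 2)
    simp only [not_le] at this
    exact_mod_cast this
  have hgap : (1 - 2 / g) / 2 * (#M - 2 * (β / g) * #M) - (1 / 2 - (1 + β) / g) * #M =
      2 * β * #M / g ^ 2 := by
    field_simp
    ring
  have hco : 0 ≤ 1 - 2 / (g : ℝ) := by
    rw [sub_nonneg, div_le_one (by positivity)]
    linarith
  calc (1 / 2 - (1 + β) / g) * #M ≤ (1 - 2 / g) / 2 * (#M - 2 * (β / g) * #M) := by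
        have : 0 ≤ 2 * β * #M / (g : ℝ) ^ 2 := by positivity
        linarith
    _ ≤ (1 - 2 / g) / 2 * #M₂ := mul_le_mul_of_nonneg_left (by linarith) (by linarith)
    _ = (1 - 1 / ((g : ℝ) / 2)) / 2 * #M₂ := by rw [one_div_div]
    _ ≤ #I := hIcard

end Bipartite

/-- In a balanced bipartite graph of girth `g` in which every balanced vertex subset of
size at most `t` per side spans at most `(2 + β/g)` times that many edges, every matching
of size at most `t` contains an induced matching of at least a `(1/2 − (1+β)/g)` fraction
of its edges (i.e. `α_{≤t}(G) ≥ 1/2 − (1+β)/g`). -/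
theorem stmt11 {n : ℕ} (G : SimpleGraph (Fin n ⊕ Fin n)) [DecidableRel G.Adj]
    (hbip : ∀ a b : Fin n ⊕ Fin n, G.Adj a b → a.isLeft ≠ b.isLeft)
    (g : ℕ) (hgirth : G.egirth = (g : ℕ∞))
    (t : ℕ) (β : ℝ) (hβ : 0 < β)
    (hsparse : ∀ T : Finset (Fin n ⊕ Fin n),
      (T.filter (fun v => v.isLeft)).card = (T.filter (fun v => v.isRight)).card →
      (T.filter (fun v => v.isLeft)).card ≤ t →
      ((((T ×ˢ T).filter (fun p => G.Adj p.1 p.2)).card : ℝ)) ≤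
        2 * (2 + β / (g : ℝ)) * ((T.filter (fun v => v.isLeft)).card : ℝ)) :
    ∀ M : Finset ((Fin n ⊕ Fin n) × (Fin n ⊕ Fin n)), GMatching G M → M.card ≤ t →
      ∃ M' ⊆ M, GInducedMatching G M' ∧
        (1 / 2 - (1 + β) / (g : ℝ)) * (M.card : ℝ) ≤ (M'.card : ℝ) := by
  intro M hM hMt
  have hκ : 1 / 2 - (1 + β) / (g : ℝ) ≤ 1 / 2 := by
    have : 0 ≤ (1 + β) / (g : ℝ) := by positivity
    linarith
  have hpeel : ∀ M' ⊆ M, M'.Nonempty →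
      ∃ P, (conflictGraph G).IsPeelable (1 / 2 - (1 + β) / g) M' P := by
    intro M' hM' hne
    by_cases hlow : ∃ e ∈ M', #{f ∈ M' | (conflictGraph G).Adj e f} ≤ 1
    · obtain ⟨e, he, hde⟩ := hlow
      exact ⟨_, SimpleGraph.isPeelable_of_degree_le_one hκ he hde⟩
    · push Not at hlow
      obtain ⟨I, hIM', hI, hcard⟩ := (hM.mono hM').exists_isIndepSet_of_two_le_degree hbip
        hgirth hβ.le hsparse ((card_le_card hM').trans hMt) hlow
      exact ⟨M', subset_rfl, hne, I, hIM', hI, by simp, hcard⟩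
  obtain ⟨I, hIM, hI, hcard⟩ :=
    (conflictGraph G).exists_isIndepSet_of_forall_exists_isPeelable _ M hpeel
  exact ⟨I, hIM, hM.gInducedMatching_of_isIndepSet hIM hI, hcard⟩
end
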